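/- Fix 0 < α < 1, C > 0, β ≥ max{1, 6/(C·α·(1−α))}, p(x) = C·x^α − β·ln(1+x), K = (β²/(Cα(1−α)))^(1/α). Let G be a group with a subadditive symmetric integer-valued length function τ with τ(e)=0, and ω(x) = exp(p(τ(x))). Set M = max{ exp(p(t) − p(s) − p(r)) : t, s, r ∈ [0, 4K] ∩ ℤ≥0 }. Then ω(xy) ≤ M·ω(x)·ω(y) for all x, y ∈ G. -/

import Mathlib

/-!
Taking logarithms, it suffices to bound the excess `p t - p s - p r` by `log M` for naturals
`t ≤ s + r`. If `β ≤ C α (1 - α)`, then `p` is increasing and concave on `[0, ∞)` with `p 0 = 0`,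
hence subadditive, and the excess is at most `0 ≤ log M`. Otherwise `K ≥ 1`, and `p` is increasing
and concave on `[K, ∞)`. A triple outside the box `[0, 4K]³` can then be moved one step towards it
without decreasing the excess: if `t < s + r`, lower the larger of `s`, `r` (monotonicity);
otherwise lower `t` together with the larger of `s`, `r` (the increments of a concave function
decrease).
-/

open Real Set

theorem ConcaveOn.map_add_sub_map_le_of_le {s : Set ℝ} {f : ℝ → ℝ} (hf : ConcaveOn ℝ s f)
    {a b h : ℝ} (ha : a ∈ s) (hb : b ∈ s) (hah : a + h ∈ s) (hbh : b + h ∈ s)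
    (hab : a ≤ b) (hh : 0 ≤ h) :
    f (b + h) - f b ≤ f (a + h) - f a := by
  rcases hh.eq_or_lt with rfl | hh
  · simp
  have hfar : slope f a (b + h) ≤ slope f a (a + h) :=
    hf.slope_anti ha ⟨hah, by simp; linarith⟩ ⟨hbh, by simp; linarith⟩ (by linarith)
  have hnear : slope f (b + h) b ≤ slope f (b + h) a :=
    hf.slope_anti hbh ⟨ha, by simp; linarith⟩ ⟨hb, by simp; linarith⟩ hab
  rw [slope_comm f (b + h) a, slope_comm] at hnear
  have := hnear.trans hfar
  rwa [slope_def_field, slope_def_field, add_sub_cancel_left, add_sub_cancel_left,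
    div_le_div_iff_of_pos_right hh] at this

theorem sub_sub_le_of_le_on_box (f : ℕ → ℝ) {K B L : ℝ} (hK : 0 ≤ K) (hKB : 2 * K + 2 ≤ B)
    (hmono : ∀ n : ℕ, K ≤ n → f n ≤ f (n + 1))
    (hinc : ∀ m n : ℕ, K ≤ m → m ≤ n → f (n + 1) - f n ≤ f (m + 1) - f m)
    (hbox : ∀ t s r : ℕ, (t : ℝ) ≤ B → (s : ℝ) ≤ B → (r : ℝ) ≤ B → f t - f s - f r ≤ L)
    {t s r : ℕ} (h : t ≤ s + r) : f t - f s - f r ≤ L := by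
  induction hN : t + s + r using Nat.strong_induction_on generalizing t s r with
  | _ N ih =>
  subst hN
  wlog hsr : s ≤ r generalizing s r
  · have := this (s := r) (r := s) (by omega) (fun m hm => ih m (by omega)) (by omega)
    linarith
  by_cases hr : B < r ∧ t < s + r
  · obtain ⟨hBr, hlt⟩ := hr
    obtain ⟨r, rfl⟩ : ∃ r', r = r' + 1 := ⟨r - 1, by omega⟩
    push_cast at hBr
    have := ih _ (by omega) (t := t) (s := s) (r := r) (by omega) rfl
    have := hmono r (by linarith)
    linarith
  by_cases htr : (t : ℝ) ≤ B ∧ (r : ℝ) ≤ B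
  · exact hbox t s r htr.1 ((Nat.cast_le.mpr hsr).trans htr.2) htr.2
  have hcast : (t : ℝ) ≤ s + r := by exact_mod_cast h
  have hsr' : (s : ℝ) ≤ r := by exact_mod_cast hsr
  have hrt : r ≤ t := by
    rcases h.eq_or_lt with rfl | hlt
    · omega
    have hrB : (r : ℝ) ≤ B := not_lt.1 fun hBr => hr ⟨hBr, hlt⟩
    have htB : B < t := not_le.1 fun htB => htr ⟨htB, hrB⟩
    exact_mod_cast hrB.trans htB.le
  have hKr : K + 1 < r := by
    by_cases hrB : (r : ℝ) ≤ B
    · have htB : B < t := not_le.1 fun htB => htr ⟨htB, hrB⟩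
      linarith
    · linarith
  have hr1 : 1 ≤ r := by exact_mod_cast (by linarith : (1 : ℝ) ≤ r)
  obtain ⟨r, rfl⟩ : ∃ r', r = r' + 1 := ⟨r - 1, by omega⟩
  obtain ⟨t, rfl⟩ : ∃ t', t = t' + 1 := ⟨t - 1, by omega⟩
  push_cast at hKr
  have := ih _ (by omega) (t := t) (s := s) (r := r) (by omega) rfl
  have := hinc r t (by linarith) (by omega)
  linarith

noncomputable def weightExponent (C α β x : ℝ) : ℝ := C * x ^ α - β * log (1 + x)

section
variable {C α β : ℝ}

theorem hasDerivAt_weightExponent {z : ℝ} (hz : 0 < z) :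
    HasDerivAt (weightExponent C α β) (C * α * z ^ (α - 1) - β / (1 + z)) z := by
  have h1z : 1 + z ≠ 0 := by linarith
  have hlog : HasDerivAt (fun w => log (1 + w)) (1 / (1 + z)) z := by
    simpa using ((hasDerivAt_id z).const_add 1).log h1z
  exact (((hasDerivAt_rpow_const (p := α) (Or.inl hz.ne')).const_mul C).sub
    (hlog.const_mul β)).congr_deriv (by ring)

theorem hasDerivAt_deriv_weightExponent {z : ℝ} (hz : 0 < z) :
    HasDerivAt (fun w => C * α * w ^ (α - 1) - β / (1 + w))
      (β / (1 + z) ^ 2 - C * α * (1 - α) * z ^ (α - 2)) z := by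
  have h1z : 1 + z ≠ 0 := by linarith
  have hinv : HasDerivAt (fun w => β / (1 + w)) (-β / (1 + z) ^ 2) z := by
    simpa [div_eq_mul_inv] using (((hasDerivAt_id z).const_add 1).inv h1z).const_mul β
  refine (((hasDerivAt_rpow_const (p := α - 1) (Or.inl hz.ne')).const_mul (C * α)).sub
    hinv).congr_deriv ?_
  rw [show α - 1 - 1 = α - 2 by ring]
  ring

theorem continuousOn_weightExponent (hα : 0 ≤ α) :
    ContinuousOn (weightExponent C α β) (Ici 0) := by
  intro z (hz : 0 ≤ z)
  have hrpow : ContinuousAt (fun w : ℝ => w ^ α) z := continuousAt_rpow_const _ _ (Or.inr hα)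
  have hlog : ContinuousAt (fun w : ℝ => log (1 + w)) z :=
    ContinuousAt.log (by fun_prop) (add_pos_of_pos_of_nonneg one_pos hz).ne'
  exact ((hrpow.const_mul C).sub (hlog.const_mul β)).continuousWithinAt

theorem max_one_rpow_le_rpow_sub_one_mul (hα0 : 0 ≤ α) (hα1 : α ≤ 1) {a z : ℝ} (ha : 0 ≤ a)
    (haz : a ≤ z) (hz : 0 < z) : max 1 (a ^ α) ≤ z ^ (α - 1) * (1 + z) := by
  have hsplit : z ^ (α - 1) * (1 + z) = z ^ (α - 1) + z ^ α := by
    rw [mul_one_add, ← rpow_add_one hz.ne', sub_add_cancel]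
  have hpos₁ := rpow_nonneg hz.le (α - 1)
  have hpos₂ := rpow_nonneg hz.le α
  rw [hsplit]
  refine max_le ?_ ?_
  · rcases le_total z 1 with hz1 | hz1
    · linarith [one_le_rpow_of_pos_of_le_one_of_nonpos hz hz1 (by linarith : α - 1 ≤ 0)]
    · linarith [one_le_rpow hz1 hα0]
  · linarith [rpow_le_rpow ha haz hα0]

theorem monotoneOn_weightExponent (hα0 : 0 ≤ α) (hα1 : α ≤ 1) (hC : 0 ≤ C) {a : ℝ} (ha : 0 ≤ a)
    (hβ : β ≤ C * α * max 1 (a ^ α)) : MonotoneOn (weightExponent C α β) (Ici a) := by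
  refine monotoneOn_of_deriv_nonneg (convex_Ici a)
    ((continuousOn_weightExponent hα0).mono (Ici_subset_Ici.2 ha)) ?_ ?_
  all_goals rw [interior_Ici]; intro z (hz : a < z); have hz0 : 0 < z := ha.trans_lt hz
  · exact (hasDerivAt_weightExponent hz0).differentiableAt.differentiableWithinAt
  rw [(hasDerivAt_weightExponent hz0).deriv, sub_nonneg, div_le_iff₀ (by linarith), mul_assoc]
  calc β ≤ C * α * max 1 (a ^ α) := hβ
    _ ≤ C * α * (z ^ (α - 1) * (1 + z)) := by
      gcongr; exact max_one_rpow_le_rpow_sub_one_mul hα0 hα1 ha hz.le hz0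

theorem concaveOn_weightExponent (hα0 : 0 ≤ α) (hα1 : α ≤ 1) (hC : 0 ≤ C) {a : ℝ} (ha : 0 ≤ a)
    (hβ : β ≤ C * α * (1 - α) * max 1 (a ^ α)) : ConcaveOn ℝ (Ici a) (weightExponent C α β) := by
  refine concaveOn_of_hasDerivWithinAt2_nonpos (f' := fun w => C * α * w ^ (α - 1) - β / (1 + w))
    (f'' := fun w => β / (1 + w) ^ 2 - C * α * (1 - α) * w ^ (α - 2)) (convex_Ici a)
    ((continuousOn_weightExponent hα0).mono (Ici_subset_Ici.2 ha)) ?_ ?_ ?_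
  all_goals rw [interior_Ici]; intro z (hz : a < z); have hz0 : 0 < z := ha.trans_lt hz
  · exact (hasDerivAt_weightExponent hz0).hasDerivWithinAt
  · exact (hasDerivAt_deriv_weightExponent hz0).hasDerivWithinAt
  have h1z : 0 < 1 + z := by linarith
  have hsq : z ^ (α - 1) * (1 + z) ≤ z ^ (α - 2) * (1 + z) ^ 2 := by
    have hfactor : z ^ (α - 2) * (1 + z) ^ 2 = z ^ (α - 1) * (1 + z) * ((1 + z) / z) := by
      rw [show α - 2 = α - 1 - 1 by ring, rpow_sub_one hz0.ne']
      field_simp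
    rw [hfactor]
    exact le_mul_of_one_le_right (by positivity) ((one_le_div hz0).2 (by linarith))
  rw [sub_nonpos, div_le_iff₀ (by positivity), mul_assoc]
  calc β ≤ C * α * (1 - α) * max 1 (a ^ α) := hβ
    _ ≤ C * α * (1 - α) * (z ^ (α - 2) * (1 + z) ^ 2) := by
      gcongr
      exact (max_one_rpow_le_rpow_sub_one_mul hα0 hα1 ha hz.le hz0).trans hsq

theorem weightExponent_zero (hα : α ≠ 0) : weightExponent C α β 0 = 0 := by
  simp [weightExponent, zero_rpow hα]

theorem weightExponent_le_add (hα0 : 0 < α) (hα1 : α ≤ 1) (hC : 0 ≤ C)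
    (hβ : β ≤ C * α * (1 - α)) {t s r : ℝ} (ht : 0 ≤ t) (hs : 0 ≤ s) (hr : 0 ≤ r)
    (h : t ≤ s + r) : weightExponent C α β t ≤ weightExponent C α β s + weightExponent C α β r := by
  have hmax : max 1 ((0 : ℝ) ^ α) = 1 := by simp [zero_rpow hα0.ne']
  have hβ' : β ≤ C * α * (1 - α) * max 1 ((0 : ℝ) ^ α) := by rwa [hmax, mul_one]
  have hmono := monotoneOn_weightExponent hα0.le hα1 hC le_rfl
    (hβ'.trans (mul_le_mul_of_nonneg_right (by nlinarith [mul_nonneg (mul_nonneg hC hα0.le) hα0.le])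
      (by positivity)))
  have hconc := concaveOn_weightExponent hα0.le hα1 hC le_rfl hβ'
  have hinc := hconc.map_add_sub_map_le_of_le (mem_Ici.2 le_rfl) hs (by simpa using hr)
    (add_nonneg hs hr) hs hr
  rw [zero_add, weightExponent_zero hα0.ne'] at hinc
  linarith [hmono ht (add_nonneg hs hr) h]

theorem weightExponent_sub_sub_le_of_le_on_box (hα0 : 0 < α) (hα1 : α < 1) (hC : 0 < C)
    (hβ1 : 1 ≤ β) (hβA : C * α * (1 - α) < β) {K L : ℝ}
    (hK : K = (β ^ 2 / (C * α * (1 - α))) ^ (1 / α))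
    (hbox : ∀ t s r : ℕ, (t : ℝ) ≤ 4 * K → (s : ℝ) ≤ 4 * K → (r : ℝ) ≤ 4 * K →
      weightExponent C α β t - weightExponent C α β s - weightExponent C α β r ≤ L)
    {t s r : ℕ} (h : t ≤ s + r) :
    weightExponent C α β t - weightExponent C α β s - weightExponent C α β r ≤ L := by
  have hA : 0 < C * α * (1 - α) := by have := sub_pos.2 hα1; positivity
  have hKα : K ^ α = β ^ 2 / (C * α * (1 - α)) := by
    rw [hK, ← rpow_mul (by positivity), one_div_mul_cancel hα0.ne', rpow_one]
  have hK1 : 1 ≤ K := hK ▸ one_le_rpow ((le_div_iff₀ hA).2 (by nlinarith)) (by positivity)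
  have hβK : β ≤ C * α * (1 - α) * max 1 (K ^ α) :=
    calc β ≤ β ^ 2 := by nlinarith
      _ = C * α * (1 - α) * K ^ α := by rw [hKα, mul_div_cancel₀ _ hA.ne']
      _ ≤ C * α * (1 - α) * max 1 (K ^ α) := by gcongr; exact le_max_right _ _
  have hmono := monotoneOn_weightExponent hα0.le hα1.le hC.le (by linarith : 0 ≤ K)
    (hβK.trans (mul_le_mul_of_nonneg_right (by nlinarith [mul_pos (mul_pos hC hα0) hα0])
      (by positivity)))
  have hconc := concaveOn_weightExponent hα0.le hα1.le hC.le (by linarith : 0 ≤ K) hβK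
  refine sub_sub_le_of_le_on_box (fun n : ℕ => weightExponent C α β n) (K := K) (B := 4 * K)
    (by linarith) (by linarith) (fun n hn => ?_) (fun m n hm hmn => ?_) hbox h
  · push_cast
    exact hmono hn (by simp only [mem_Ici]; linarith) (by linarith)
  · have hmn : (m : ℝ) ≤ n := by exact_mod_cast hmn
    push_cast
    exact hconc.map_add_sub_map_le_of_le hm (hm.trans hmn) (by simp only [mem_Ici]; linarith)
      (by simp only [mem_Ici]; linarith) hmn zero_le_one

end

theorem stmt_8_general (α C β : ℝ) (hα0 : 0 < α) (hα1 : α < 1) (hC : 0 < C)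
    (hβ : max 1 (6 / (C * α * (1 - α))) ≤ β)
    (p : ℝ → ℝ)
    (hp : ∀ x, p x = C * x ^ α - β * Real.log (1 + x))
    (K : ℝ) (hK : K = (β ^ 2 / (C * α * (1 - α))) ^ (1 / α))
    {G : Type*} [Group G] (τ : G → ℕ)
    (hsub : ∀ x y, τ (x * y) ≤ τ x + τ y)
    (ω : G → ℝ) (hω : ∀ x, ω x = Real.exp (p (τ x)))
    (M : ℝ)
    (hM : IsGreatest {m : ℝ | ∃ t s r : ℕ, (t : ℝ) ≤ 4 * K ∧ (s : ℝ) ≤ 4 * K ∧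
      (r : ℝ) ≤ 4 * K ∧ m = Real.exp (p t - p s - p r)} M) :
    ∀ x y : G, ω (x * y) ≤ M * ω x * ω y := by
  obtain rfl : p = weightExponent C α β := funext hp
  have hβ1 : 1 ≤ β := (le_max_left _ _).trans hβ
  have hK0 : 0 ≤ K := hK ▸ rpow_nonneg (by have := sub_pos.2 hα1; positivity) _
  have hM1 : 1 ≤ M := hM.2 ⟨0, 0, 0, by simpa using hK0, by simpa using hK0, by simpa using hK0,
    by simp [weightExponent_zero hα0.ne']⟩
  have hM0 : 0 < M := one_pos.trans_le hM1
  have hexcess : ∀ t s r : ℕ, t ≤ s + r → weightExponent C α β t - weightExponent C α β s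
      - weightExponent C α β r ≤ log M := by
    intro t s r h
    by_cases hsmall : β ≤ C * α * (1 - α)
    · have := weightExponent_le_add hα0 hα1.le hC.le hsmall (Nat.cast_nonneg t)
        (Nat.cast_nonneg s) (Nat.cast_nonneg r) (by exact_mod_cast h)
      linarith [log_nonneg hM1]
    · exact weightExponent_sub_sub_le_of_le_on_box hα0 hα1 hC hβ1 (not_le.1 hsmall) hK
        (fun t s r ht hs hr => (le_log_iff_exp_le hM0).2 (hM.2 ⟨t, s, r, ht, hs, hr, rfl⟩)) h
  intro x y
  rw [hω, hω, hω]
  calc _ ≤ exp (log M + weightExponent C α β (τ x) + weightExponent C α β (τ y)) :=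
        exp_le_exp.2 (by linarith [hexcess _ _ _ (hsub x y)])
    _ = M * exp (weightExponent C α β (τ x)) * exp (weightExponent C α β (τ y)) := by
        rw [exp_add, exp_add, exp_log hM0]

theorem stmt_8 (α C β : ℝ) (hα0 : 0 < α) (hα1 : α < 1) (hC : 0 < C)
    (hβ : max 1 (6 / (C * α * (1 - α))) ≤ β)
    (p : ℝ → ℝ)
    (hp : ∀ x, p x = C * x ^ α - β * Real.log (1 + x))
    (K : ℝ) (hK : K = (β ^ 2 / (C * α * (1 - α))) ^ (1 / α))
    {G : Type*} [Group G] (τ : G → ℕ)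
    (hsub : ∀ x y, τ (x * y) ≤ τ x + τ y)
    (hsymm : ∀ x, τ x⁻¹ = τ x) (he : τ 1 = 0)
    (ω : G → ℝ) (hω : ∀ x, ω x = Real.exp (p (τ x)))
    (M : ℝ)
    (hM : IsGreatest {m : ℝ | ∃ t s r : ℕ, (t : ℝ) ≤ 4 * K ∧ (s : ℝ) ≤ 4 * K ∧
      (r : ℝ) ≤ 4 * K ∧ m = Real.exp (p t - p s - p r)} M) :
    ∀ x y : G, ω (x * y) ≤ M * ω x * ω y :=
  stmt_8_general α C β hα0 hα1 hC hβ p hp K hK τ hsub ω hω M hM
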